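/- arXiv:1610.03973 — 6 statements merged into one kernel-verified Lean document; each statement's English description precedes it below -/
import Mathlib

section
/- Let A be a symmetric 2×2 complex matrix (Aᵀ = A), and let u₁, u₂ ∈ ℂ² be orthonormal vectors with A·Aᴴ·u_j = μ_j·u_j for j = 1, 2 and μ₁ ≠ μ₂. Then u₁ᴴ·A·conj(u₂) = 0 and A = c₁·u₁u₁ᵀ + c₂·u₂u₂ᵀ, where c_j = u_jᴴ·A·conj(u_j) and u_ju_jᵀ denotes the outer product (a 2×2 matrix). -/
/-!
Since `A` is symmetric, `Aᴴ` is the entrywise conjugate of `A`, so conjugating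
`A Aᴴ v = ν v` gives `Aᴴ A conj(v) = conj(ν) conj(v)`; hence `v ↦ A conj(v)` maps
`ν`-eigenvectors of the Hermitian matrix `A Aᴴ` to `conj(ν)`-eigenvectors. As
`conj(μ₁) ≠ conj(μ₂)`, orthogonality of eigenvectors of a Hermitian matrix gives
`u₁ᴴ A conj(u₂) = 0`. Expanding in the orthonormal basis then yields `A conj(u_j) = c_j u_j`,
and multiplying the completeness relation `∑ conj(u_j) u_jᵀ = 1` by `A` gives the decomposition.
-/

open Matrix

namespace Matrix

variable {K n : Type*} [Field K] [StarRing K] [Fintype n]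

theorem dotProduct_eq_zero_of_isHermitian_of_mulVec_eq_smul {H : Matrix n n K}
    (hH : H.IsHermitian) {u w : n → K} {μ ν : K} (hu : H *ᵥ u = μ • u) (hw : H *ᵥ w = ν • w)
    (hμν : star μ ≠ ν) : star u ⬝ᵥ w = 0 := by
  have h : star μ * (star u ⬝ᵥ w) = ν * (star u ⬝ᵥ w) :=
    calc star μ * (star u ⬝ᵥ w) = star (H *ᵥ u) ⬝ᵥ w := by simp [hu, star_smul]
      _ = star u ⬝ᵥ H *ᵥ w := by rw [star_mulVec, hH.eq, dotProduct_mulVec]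
      _ = ν * (star u ⬝ᵥ w) := by simp [hw]
  have h' : (star μ - ν) * (star u ⬝ᵥ w) = 0 := by linear_combination h
  exact (mul_eq_zero.mp h').resolve_left (sub_ne_zero.mpr hμν)

section Symmetric

variable {A : Matrix n n K} (hA : Aᵀ = A)
include hA

theorem transpose_mul_conjTranspose_of_transpose_eq : (A * Aᴴ)ᵀ = Aᴴ * A := by
  rw [transpose_mul, ← conjTranspose_transpose_eq_transpose_conjTranspose, hA]

theorem mul_conjTranspose_mulVec_mulVec_star {v : n → K} {μ : K}
    (hv : (A * Aᴴ) *ᵥ v = μ • v) : (A * Aᴴ) *ᵥ (A *ᵥ star v) = star μ • (A *ᵥ star v) := by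
  have hconj : (Aᴴ * A) *ᵥ star v = star μ • star v := by
    rw [← transpose_mul_conjTranspose_of_transpose_eq hA, mulVec_transpose,
      ← (isHermitian_mul_conjTranspose_self A).eq, ← star_mulVec, hv, star_smul]
  rw [mulVec_mulVec, Matrix.mul_assoc, ← mulVec_mulVec, hconj, mulVec_smul]

theorem dotProduct_mulVec_star_eq_zero {u v : n → K} {μ ν : K}
    (hu : (A * Aᴴ) *ᵥ u = μ • u) (hv : (A * Aᴴ) *ᵥ v = ν • v) (hμν : μ ≠ ν) :
    star u ⬝ᵥ A *ᵥ star v = 0 :=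
  dotProduct_eq_zero_of_isHermitian_of_mulVec_eq_smul (isHermitian_mul_conjTranspose_self A) hu
    (mul_conjTranspose_mulVec_mulVec_star hA hv) (star_injective.ne hμν)

end Symmetric

section Orthonormal

variable {R : Type*} [CommRing R] [StarRing R] [DecidableEq n] {u : n → n → R}

theorem sum_vecMulVec_self_star_eq_one (hu : ∀ i j, star (u i) ⬝ᵥ u j = (1 : Matrix n n R) i j) :
    ∑ i, vecMulVec (u i) (star (u i)) = 1 := by
  let V : Matrix n n R := of fun i => star (u i)
  have hV : V * Vᴴ = 1 := by
    ext i j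
    simpa [V, mul_apply, dotProduct] using hu i j
  have hV' : Vᴴ * V = 1 := mul_eq_one_comm.mp hV
  ext a b
  simpa [V, mul_apply, sum_apply, vecMulVec_apply] using congrFun₂ hV' a b

variable (hu : ∑ i, vecMulVec (u i) (star (u i)) = 1)
include hu

theorem eq_sum_dotProduct_smul (v : n → R) : v = ∑ i, (star (u i) ⬝ᵥ v) • u i := by
  simpa [sum_mulVec, vecMulVec_mulVec] using (congrArg (· *ᵥ v) hu).symm

theorem eq_sum_smul_vecMulVec_of_mulVec_star {A : Matrix n n R} {c : n → R}
    (hA : ∀ i, A *ᵥ star (u i) = c i • u i) : A = ∑ i, c i • vecMulVec (u i) (u i) :=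
  calc A = A * (∑ i, vecMulVec (u i) (star (u i)))ᵀ := by rw [hu, transpose_one, Matrix.mul_one]
    _ = ∑ i, c i • vecMulVec (u i) (u i) := by
      simp [transpose_sum, Matrix.mul_sum, mul_vecMulVec, hA]

end Orthonormal

theorem mulVec_star_eq_smul_of_orthonormal_eigenbasis [DecidableEq n] {A : Matrix n n K}
    (hA : Aᵀ = A) {u : n → n → K} (hu : ∑ i, vecMulVec (u i) (star (u i)) = 1) {μ : n → K}
    (hμ : Function.Injective μ) (huμ : ∀ i, (A * Aᴴ) *ᵥ u i = μ i • u i) (j : n) :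
    A *ᵥ star (u j) = (star (u j) ⬝ᵥ A *ᵥ star (u j)) • u j := by
  conv_lhs => rw [eq_sum_dotProduct_smul hu (A *ᵥ star (u j))]
  refine Finset.sum_eq_single j (fun i _ hij => ?_) (by simp)
  rw [dotProduct_mulVec_star_eq_zero hA (huμ i) (huμ j) (hμ.ne hij), zero_smul]

end Matrix

/-- **Takagi-type decomposition of a symmetric `2 × 2` matrix.**
If `A` is complex symmetric and `u₁, u₂` are orthonormal eigenvectors of `A·Aᴴ`
with distinct eigenvalues, then `u₁ᴴ·A·conj(u₂) = 0` and
`A = c₁·u₁u₁ᵀ + c₂·u₂u₂ᵀ` where `c_j = u_jᴴ·A·conj(u_j)`. -/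
theorem symmetric_matrix_takagi_decomposition
    (A : Matrix (Fin 2) (Fin 2) ℂ) (hA : Aᵀ = A)
    (u₁ u₂ : Fin 2 → ℂ)
    (h11 : star u₁ ⬝ᵥ u₁ = 1) (h22 : star u₂ ⬝ᵥ u₂ = 1)
    (h12 : star u₁ ⬝ᵥ u₂ = 0)
    (μ₁ μ₂ : ℂ)
    (hu₁ : (A * Aᴴ).mulVec u₁ = μ₁ • u₁)
    (hu₂ : (A * Aᴴ).mulVec u₂ = μ₂ • u₂)
    (hμ : μ₁ ≠ μ₂) :
    star u₁ ⬝ᵥ A.mulVec (star u₂) = 0 ∧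
    A = (star u₁ ⬝ᵥ A.mulVec (star u₁)) • Matrix.vecMulVec u₁ u₁
      + (star u₂ ⬝ᵥ A.mulVec (star u₂)) • Matrix.vecMulVec u₂ u₂ := by
  have horth : ∀ i j,
      star (![u₁, u₂] i) ⬝ᵥ ![u₁, u₂] j = (1 : Matrix (Fin 2) (Fin 2) ℂ) i j := by
    intro i j
    fin_cases i <;> fin_cases j <;> simp [h11, h22, h12, star_dotProduct _ u₁]
  have hcomplete := sum_vecMulVec_self_star_eq_one horth
  have hinj : Function.Injective ![μ₁, μ₂] := by
    intro i j
    fin_cases i <;> fin_cases j <;> simp [hμ, hμ.symm]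
  have heig : ∀ i, (A * Aᴴ) *ᵥ ![u₁, u₂] i = ![μ₁, μ₂] i • ![u₁, u₂] i :=
    Fin.forall_fin_two.mpr ⟨hu₁, hu₂⟩
  refine ⟨dotProduct_mulVec_star_eq_zero hA hu₁ hu₂ hμ, ?_⟩
  simpa [Fin.sum_univ_two] using eq_sum_smul_vecMulVec_of_mulVec_star hcomplete
    (mulVec_star_eq_smul_of_orthonormal_eigenbasis hA hcomplete hinj heig)
end

section
/- Let A be a symmetric 2×2 complex matrix (Aᵀ = A), and let u₁, u₂ ∈ ℂ² be orthonormal vectors with A·Aᴴ·u_j = μ_j·u_j for j = 1, 2 and μ₁ ≠ μ₂. Set c_j = u_jᴴ·A·conj(u_j). Then A·conj(u_j) = c_j·u_j and |c_j|² = μ_j for j = 1, 2. -/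
open Matrix

/-!
For symmetric `A` the antilinear map `T x = A·conj(x)` satisfies `T ∘ T = A·Aᴴ`, so `T` sends
a `μ`-eigenvector `u` of `A·Aᴴ` to a `conj μ`-eigenvector. As `A·Aᴴ` is Hermitian and
`conj μ ≠ conj ν`, `T u` is orthogonal to the `ν`-eigenvector `w`, hence `T u = c·u` with
`c = uᴴ·T u`; applying `T` once more gives `μ·u = T (T u) = |c|²·u`.
-/

namespace Matrix

section Symmetric

variable {n R : Type*} [Fintype n] [CommSemiring R] [StarRing R] {A : Matrix n n R}

theorem conjTranspose_mulVec_of_transpose_eq (hA : Aᵀ = A) (x : n → R) :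
    Aᴴ *ᵥ x = star (A *ᵥ star x) := by
  rw [← vecMul_conjTranspose, ← vecMul_transpose,
    ← conjTranspose_transpose_eq_transpose_conjTranspose, hA]

theorem mul_conjTranspose_mulVec_of_transpose_eq (hA : Aᵀ = A) (x : n → R) :
    (A * Aᴴ) *ᵥ x = A *ᵥ star (A *ᵥ star x) := by
  rw [← mulVec_mulVec, conjTranspose_mulVec_of_transpose_eq hA]

theorem mul_conjTranspose_mulVec_mulVec_star_of_transpose_eq (hA : Aᵀ = A) {μ : R}
    {u : n → R} (hu : (A * Aᴴ) *ᵥ u = μ • u) :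
    (A * Aᴴ) *ᵥ (A *ᵥ star u) = star μ • (A *ᵥ star u) := by
  rw [mul_conjTranspose_mulVec_of_transpose_eq hA,
    ← mul_conjTranspose_mulVec_of_transpose_eq hA u, hu, star_smul, mulVec_smul]

end Symmetric

theorem IsHermitian.star_dotProduct_eq_zero_of_mulVec_eq_smul {n K : Type*} [Fintype n]
    [Field K] [StarRing K] {M : Matrix n n K} (hM : M.IsHermitian) {α β : K} {v w : n → K}
    (hv : M *ᵥ v = α • v) (hw : M *ᵥ w = β • w) (hαβ : α ≠ star β) :
    star w ⬝ᵥ v = 0 := by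
  have hwM : star w ᵥ* M = star β • star w := by
    rw [← hM.eq, ← star_mulVec, hw, star_smul]
  have h : α * (star w ⬝ᵥ v) = star β * (star w ⬝ᵥ v) := by
    rw [← smul_eq_mul, ← dotProduct_smul, ← hv, dotProduct_mulVec, hwM, smul_dotProduct,
      smul_eq_mul]
  by_contra hwv
  exact hαβ (mul_right_cancel₀ hwv h)

theorem eq_sum_star_dotProduct_smul_of_orthonormal {n R : Type*} [Fintype n] [DecidableEq n]
    [CommRing R] [StarRing R] {u : n → n → R}
    (hu : ∀ i j, star (u i) ⬝ᵥ u j = if i = j then 1 else 0) (v : n → R) :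
    v = ∑ i, (star (u i) ⬝ᵥ v) • u i := by
  set U : Matrix n n R := of fun i => star (u i)
  have hU : U * Uᴴ = 1 := by
    ext i j
    simpa [U, mul_apply, one_apply, dotProduct] using hu i j
  calc v = (Uᴴ * U) *ᵥ v := by rw [mul_eq_one_comm.mp hU, one_mulVec]
    _ = ∑ i, (star (u i) ⬝ᵥ v) • u i := by
      rw [← mulVec_mulVec]
      ext k
      simp [U, mulVec, dotProduct, Finset.sum_apply, mul_comm]

section Fin2

variable {K : Type*} [Field K] [StarRing K]

theorem eq_star_dotProduct_smul_of_star_dotProduct_eq_zero {u w v : Fin 2 → K}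
    (huu : star u ⬝ᵥ u = 1) (hww : star w ⬝ᵥ w = 1) (huw : star u ⬝ᵥ w = 0)
    (hwv : star w ⬝ᵥ v = 0) : v = (star u ⬝ᵥ v) • u := by
  have hwu : star w ⬝ᵥ u = 0 := by rw [star_dotProduct, huw, star_zero]
  have horth : ∀ i j, star (![u, w] i) ⬝ᵥ ![u, w] j = if i = j then 1 else 0 := by
    intro i j
    fin_cases i <;> fin_cases j <;> simp [huu, hww, huw, hwu]
  simpa only [Fin.sum_univ_two, cons_val_zero, cons_val_one, hwv, zero_smul, add_zero] using
    eq_sum_star_dotProduct_smul_of_orthonormal horth v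

theorem mulVec_star_eq_smul_of_transpose_eq {A : Matrix (Fin 2) (Fin 2) K} (hA : Aᵀ = A)
    {u w : Fin 2 → K} (huu : star u ⬝ᵥ u = 1) (hww : star w ⬝ᵥ w = 1)
    (huw : star u ⬝ᵥ w = 0) {μ ν : K} (hu : (A * Aᴴ) *ᵥ u = μ • u)
    (hw : (A * Aᴴ) *ᵥ w = ν • w) (hμν : μ ≠ ν) :
    A *ᵥ star u = (star u ⬝ᵥ A *ᵥ star u) • u := by
  refine eq_star_dotProduct_smul_of_star_dotProduct_eq_zero huu hww huw ?_
  exact (isHermitian_mul_conjTranspose_self A).star_dotProduct_eq_zero_of_mulVec_eq_smul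
    (mul_conjTranspose_mulVec_mulVec_star_of_transpose_eq hA hu) hw (star_injective.ne hμν)

end Fin2

theorem star_mul_self_eq_of_mulVec_star_eq_smul {n K : Type*} [Fintype n] [Field K]
    [StarRing K] {A : Matrix n n K} (hA : Aᵀ = A) {u : n → K} (hu0 : u ≠ 0) {μ c : K}
    (hu : (A * Aᴴ) *ᵥ u = μ • u) (hc : A *ᵥ star u = c • u) : star c * c = μ := by
  refine smul_left_injective K hu0 (show (star c * c) • u = μ • u from ?_)
  rw [← hu, mul_conjTranspose_mulVec_of_transpose_eq hA, hc, star_smul, mulVec_smul, hc,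
    smul_smul]

end Matrix

theorem mulVec_star_eq_smul_and_normSq_eq {A : Matrix (Fin 2) (Fin 2) ℂ} (hA : Aᵀ = A)
    {u w : Fin 2 → ℂ} (huu : star u ⬝ᵥ u = 1) (hww : star w ⬝ᵥ w = 1)
    (huw : star u ⬝ᵥ w = 0) {μ ν : ℂ} (hu : (A * Aᴴ) *ᵥ u = μ • u)
    (hw : (A * Aᴴ) *ᵥ w = ν • w) (hμν : μ ≠ ν) :
    A *ᵥ star u = (star u ⬝ᵥ A *ᵥ star u) • u ∧
      (Complex.normSq (star u ⬝ᵥ A *ᵥ star u) : ℂ) = μ := by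
  have hc := mulVec_star_eq_smul_of_transpose_eq hA huu hww huw hu hw hμν
  have hu0 : u ≠ 0 := by
    rintro rfl
    simp at huu
  exact ⟨hc, Complex.normSq_eq_conj_mul_self.trans
    (star_mul_self_eq_of_mulVec_star_eq_smul hA hu0 hu hc)⟩

/-- **Eigenvectors of `A·Aᴴ` solve the con-eigenvalue problem.**
If `A` is complex symmetric and `u₁, u₂` are orthonormal eigenvectors of `A·Aᴴ`
with distinct eigenvalues `μ₁ ≠ μ₂`, then with `c_j = u_jᴴ·A·conj(u_j)` one has
`A·conj(u_j) = c_j·u_j` and `|c_j|² = μ_j` for `j = 1, 2`. -/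
theorem con_eigenvalue_problem_solution
    (A : Matrix (Fin 2) (Fin 2) ℂ) (hA : Aᵀ = A)
    (u₁ u₂ : Fin 2 → ℂ)
    (h11 : star u₁ ⬝ᵥ u₁ = 1) (h22 : star u₂ ⬝ᵥ u₂ = 1)
    (h12 : star u₁ ⬝ᵥ u₂ = 0)
    (μ₁ μ₂ : ℂ)
    (hu₁ : (A * Aᴴ).mulVec u₁ = μ₁ • u₁)
    (hu₂ : (A * Aᴴ).mulVec u₂ = μ₂ • u₂)
    (hμ : μ₁ ≠ μ₂)
    (c₁ c₂ : ℂ)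
    (hc₁ : c₁ = star u₁ ⬝ᵥ A.mulVec (star u₁))
    (hc₂ : c₂ = star u₂ ⬝ᵥ A.mulVec (star u₂)) :
    (A.mulVec (star u₁) = c₁ • u₁ ∧ (Complex.normSq c₁ : ℂ) = μ₁) ∧
    (A.mulVec (star u₂) = c₂ • u₂ ∧ (Complex.normSq c₂ : ℂ) = μ₂) := by
  have h21 : star u₂ ⬝ᵥ u₁ = 0 := by rw [star_dotProduct, h12, star_zero]
  subst hc₁ hc₂
  exact ⟨mulVec_star_eq_smul_and_normSq_eq hA h11 h22 h12 hu₁ hu₂ hμ,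
    mulVec_star_eq_smul_and_normSq_eq hA h22 h11 h21 hu₂ hu₁ hμ.symm⟩
end

section
/- Let A be a symmetric 2×2 complex matrix (Aᵀ = A), and let u₁, u₂ ∈ ℂ² be orthonormal vectors with A·Aᴴ·u_j = μ_j·u_j for j = 1, 2 and μ₁ ≠ μ₂. Write c_j = u_jᴴ·A·conj(u_j) = λ_j·e^{−iγ_j} with λ_j = |c_j| and γ_j ∈ ℝ. Then the four vectors ψ_{j,±} = (±e^{−iγ_j}·u_j, conj(u_j))/√2 ∈ ℂ⁴ (j = 1,2) form an orthonormal basis of ℂ⁴, and H(A)·ψ_{j,±} = ±λ_j·ψ_{j,±}. -/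
/-! Since `A` is symmetric, `Aᴴ = conj A`, hence `A Aᴴ (A conj u) = A conj (A Aᴴ u)`: the vector
`A conj u_j` is again an eigenvector of the Hermitian matrix `A Aᴴ` for the (real) eigenvalue
`μ_j`. The eigenvalues being simple, `A conj u_j = c_j u_j`, and conjugating gives
`Aᴴ u_j = conj c_j conj u_j`. Writing `c_j = λ_j e^{-iγ_j}`, both blocks of `H(A) ψ_{j,±}` are
`±λ_j` times those of `ψ_{j,±}`. Orthonormality is a direct computation, and four orthonormal
vectors span `ℂ⁴`. -/

open Matrix

namespace Matrix

variable {n ι R K : Type*} [Fintype n]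

section CommRing

variable [CommRing R] [StarRing R]

theorem IsSymm.star_mulVec {A : Matrix n n R} (hA : A.IsSymm) (v : n → R) :
    star (A *ᵥ v) = Aᴴ *ᵥ star v := by
  rw [Matrix.star_mulVec, ← vecMul_transpose, hA.conjTranspose.eq]

theorem IsSymm.mulVec_star {A : Matrix n n R} (hA : A.IsSymm) (v : n → R) :
    A *ᵥ star v = star (Aᴴ *ᵥ v) := by
  rw [hA.conjTranspose.star_mulVec, conjTranspose_conjTranspose]

theorem IsSymm.mul_conjTranspose_mulVec_mulVec_star {A : Matrix n n R} (hA : A.IsSymm)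
    {u : n → R} {μ : R} (hu : (A * Aᴴ) *ᵥ u = μ • u) :
    (A * Aᴴ) *ᵥ (A *ᵥ star u) = star μ • (A *ᵥ star u) :=
  calc (A * Aᴴ) *ᵥ (A *ᵥ star u) = A *ᵥ (Aᴴ *ᵥ star (Aᴴ *ᵥ u)) := by
        rw [← mulVec_mulVec, hA.mulVec_star]
    _ = A *ᵥ star ((A * Aᴴ) *ᵥ u) := by rw [← hA.star_mulVec, mulVec_mulVec]
    _ = star μ • (A *ᵥ star u) := by rw [hu, star_smul, mulVec_smul]

theorem IsHermitian.star_dotProduct_mulVec {M : Matrix n n R} (hM : M.IsHermitian)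
    (v w : n → R) : star w ⬝ᵥ (M *ᵥ v) = star (M *ᵥ w) ⬝ᵥ v := by
  rw [dotProduct_mulVec, Matrix.star_mulVec, hM.eq]

theorem IsHermitian.mul_star_dotProduct_of_mulVec_eq_smul {M : Matrix n n R}
    (hM : M.IsHermitian) {v w : n → R} {μ ν : R} (hv : M *ᵥ v = μ • v) (hw : M *ᵥ w = ν • w) :
    μ * (star w ⬝ᵥ v) = star ν * (star w ⬝ᵥ v) := by
  have h := hM.star_dotProduct_mulVec v w
  rwa [hv, hw, star_smul, dotProduct_smul, smul_dotProduct, smul_eq_mul, smul_eq_mul] at h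

theorem sum_star_dotProduct_smul_of_orthonormal [DecidableEq n] {u : n → n → R}
    (hu : ∀ j k, star (u j) ⬝ᵥ u k = if j = k then 1 else 0) (v : n → R) :
    ∑ k, (star (u k) ⬝ᵥ v) • u k = v := by
  have hWU : (of u).map star * (of u)ᵀ = 1 := by
    ext j k
    simpa [mul_apply, one_apply, dotProduct] using hu j k
  calc ∑ k, (star (u k) ⬝ᵥ v) • u k = (of u)ᵀ *ᵥ ((of u).map star *ᵥ v) := by
        rw [mulVec_transpose, vecMul_eq_sum]; rfl
    _ = v := by rw [mulVec_mulVec, mul_eq_one_comm.mp hWU, one_mulVec]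

theorem star_sumElim_dotProduct_sumElim (a b : R) (v w : n → R) :
    star (Sum.elim (a • v) (star v)) ⬝ᵥ Sum.elim (b • w) (star w)
      = star a * b * (star v ⬝ᵥ w) + star (star v ⬝ᵥ w) := by
  rw [Function.star_sumElim, sumElim_dotProduct_sumElim, star_star, star_smul, smul_dotProduct,
    dotProduct_smul, smul_eq_mul, smul_eq_mul, ← mul_assoc]
  congr 1
  rw [← star_dotProduct_star, star_star, dotProduct_comm]

theorem IsSymm.fromBlocks_mulVec_sumElim {A : Matrix n n R} (hA : A.IsSymm) {w : n → R}
    {r e s : R} (hw : A *ᵥ star w = (r * e) • w) (hr : star r = r) (he : star e * e = 1)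
    (hs : s * s = 1) :
    Matrix.fromBlocks 0 A Aᴴ 0 *ᵥ Sum.elim ((s * e) • w) (star w)
      = (s * r) • Sum.elim ((s * e) • w) (star w) := by
  have hAw : Aᴴ *ᵥ w = (star e * r) • star w := by
    rw [← star_star w, ← hA.star_mulVec, hw, star_smul, star_mul, hr, star_star]
  rw [fromBlocks_mulVec, Sum.elim_comp_inl, Sum.elim_comp_inr, zero_mulVec, zero_mulVec,
    zero_add, add_zero, hw, mulVec_smul, hAw]
  ext (i | i) <;> simp only [Sum.elim_inl, Sum.elim_inr, Pi.smul_apply, smul_eq_mul]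
  · linear_combination -r * e * w i * hs
  · linear_combination s * r * star (w i) * he

theorem linearIndependent_of_star_dotProduct_eq_ite [Fintype ι] [DecidableEq ι]
    {v : ι → n → R} (hv : ∀ p q, star (v p) ⬝ᵥ v q = if p = q then 1 else 0) :
    LinearIndependent R v := by
  rw [Fintype.linearIndependent_iff]
  intro g hg p
  simpa [dotProduct_sum, hv] using congrArg (star (v p) ⬝ᵥ ·) hg

end CommRing

section Field

variable [Field K] [StarRing K]

theorem IsHermitian.star_eq_of_mulVec_eq_smul {M : Matrix n n K} (hM : M.IsHermitian)
    {v : n → K} {μ : K} (hv : M *ᵥ v = μ • v) (hv0 : star v ⬝ᵥ v ≠ 0) : star μ = μ :=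
  ((mul_eq_mul_right_iff.mp (hM.mul_star_dotProduct_of_mulVec_eq_smul hv hv)).resolve_right
    hv0).symm

theorem IsHermitian.star_dotProduct_eq_zero_of_ne {M : Matrix n n K} (hM : M.IsHermitian)
    {v w : n → K} {μ ν : K} (hv : M *ᵥ v = μ • v) (hw : M *ᵥ w = ν • w) (hν : star ν = ν)
    (hne : μ ≠ ν) : star w ⬝ᵥ v = 0 := by
  have h := hM.mul_star_dotProduct_of_mulVec_eq_smul hv hw
  rw [hν] at h
  exact (mul_eq_mul_right_iff.mp h).resolve_left hne

theorem IsHermitian.eq_star_dotProduct_smul_of_mulVec_eq_smul [DecidableEq n]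
    {M : Matrix n n K} (hM : M.IsHermitian) {u : n → n → K}
    (horth : ∀ j k, star (u j) ⬝ᵥ u k = if j = k then 1 else 0) {μ : n → K}
    (hu : ∀ k, M *ᵥ u k = μ k • u k) (hμ : Function.Injective μ) {j : n} {v : n → K}
    (hv : M *ᵥ v = μ j • v) : v = (star (u j) ⬝ᵥ v) • u j := by
  conv_lhs => rw [← sum_star_dotProduct_smul_of_orthonormal horth v]
  refine Finset.sum_eq_single j (fun k _ hkj => ?_) (by simp)
  have hμk : star (μ k) = μ k := hM.star_eq_of_mulVec_eq_smul (hu k) (by simp [horth])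
  rw [hM.star_dotProduct_eq_zero_of_ne hv (hu k) hμk (hμ.ne (Ne.symm hkj)), zero_smul]

theorem IsSymm.mulVec_star_eq_smul [DecidableEq n] {A : Matrix n n K} (hA : A.IsSymm)
    {u : n → n → K} (horth : ∀ j k, star (u j) ⬝ᵥ u k = if j = k then 1 else 0) {μ : n → K}
    (hu : ∀ k, (A * Aᴴ) *ᵥ u k = μ k • u k) (hμ : Function.Injective μ) (j : n) :
    A *ᵥ star (u j) = (star (u j) ⬝ᵥ A *ᵥ star (u j)) • u j := by
  have hM := isHermitian_mul_conjTranspose_self A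
  have hμj : star (μ j) = μ j := hM.star_eq_of_mulVec_eq_smul (hu j) (by simp [horth])
  refine hM.eq_star_dotProduct_smul_of_mulVec_eq_smul horth hu hμ ?_
  rw [hA.mul_conjTranspose_mulVec_mulVec_star (hu j), hμj]

end Field

end Matrix

theorem injective_of_apply_zero_ne_apply_one {α : Type*} {f : Fin 2 → α} (h : f 0 ≠ f 1) :
    Function.Injective f := by
  intro a b hab
  fin_cases a <;> fin_cases b <;> simp_all [eq_comm]

section Chiral

variable {n ι R : Type*} [Fintype n] [CommRing R] [StarRing R]

/-- `√2 ψ_{j,±}` for `p = (j, ±)`, with `true` encoding `+` and `e j = e^{-iγ_j}`. -/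
def chiralState (e : ι → R) (u : ι → n → R) (p : ι × Bool) : n ⊕ n → R :=
  Sum.elim (((if p.2 then 1 else -1) * e p.1) • u p.1) (star (u p.1))

theorem star_chiralState_dotProduct [DecidableEq ι] {u : ι → n → R}
    (horth : ∀ j k, star (u j) ⬝ᵥ u k = if j = k then 1 else 0) {e : ι → R}
    (he : ∀ j, star (e j) * e j = 1) (p q : ι × Bool) :
    star (chiralState e u p) ⬝ᵥ chiralState e u q = if p = q then 2 else 0 := by
  obtain ⟨j, s⟩ := p
  obtain ⟨k, t⟩ := q
  simp only [chiralState, star_sumElim_dotProduct_sumElim, horth]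
  by_cases hjk : j = k
  · subst hjk
    cases s <;> cases t <;> norm_num [he j]
  · simp [hjk]

end Chiral

theorem bloch_eigenstates_chiral_hamiltonian_general
    (A : Matrix (Fin 2) (Fin 2) ℂ) (hA : Aᵀ = A)
    (u : Fin 2 → Fin 2 → ℂ)
    (horth : ∀ j k : Fin 2, star (u j) ⬝ᵥ u k = if j = k then 1 else 0)
    (μ : Fin 2 → ℂ)
    (hu : ∀ j : Fin 2, (A * Aᴴ).mulVec (u j) = μ j • u j)
    (hμ : μ 0 ≠ μ 1)
    (c : Fin 2 → ℂ)
    (hc : ∀ j : Fin 2, c j = star (u j) ⬝ᵥ A.mulVec (star (u j)))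
    (lam γ : Fin 2 → ℝ)
    (hγ : ∀ j : Fin 2, c j = (lam j : ℂ) * Complex.exp (-(γ j : ℂ) * Complex.I))
    (ψ : Fin 2 × Bool → (Fin 2 ⊕ Fin 2 → ℂ))
    (hψ : ∀ j : Fin 2, ∀ s : Bool,
      ψ (j, s) = ((Real.sqrt 2 : ℂ))⁻¹ •
        Sum.elim
          (fun i => (if s then (1 : ℂ) else -1)
            * Complex.exp (-(γ j : ℂ) * Complex.I) * u j i)
          (fun i => star (u j i))) :
    (∀ p q : Fin 2 × Bool, star (ψ p) ⬝ᵥ ψ q = if p = q then 1 else 0) ∧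
    Submodule.span ℂ (Set.range ψ) = ⊤ ∧
    (∀ j : Fin 2, ∀ s : Bool,
      (Matrix.fromBlocks 0 A Aᴴ 0).mulVec (ψ (j, s))
        = ((if s then (1 : ℂ) else -1) * (lam j : ℂ)) • ψ (j, s)) := by
  set e : Fin 2 → ℂ := fun j => Complex.exp (-(γ j : ℂ) * Complex.I)
  have he : ∀ j, star (e j) * e j = 1 := fun j => by
    simp [e, ← Complex.exp_conj, ← Complex.exp_add]
  have hψe : ψ = fun p => ((Real.sqrt 2 : ℂ))⁻¹ • chiralState e u p :=
    funext fun ⟨j, s⟩ => hψ j s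
  have hnorm : star ((Real.sqrt 2 : ℂ))⁻¹ * ((Real.sqrt 2 : ℂ))⁻¹ = 2⁻¹ := by
    rw [star_inv₀, Complex.star_def, Complex.conj_ofReal, ← mul_inv, ← Complex.ofReal_mul,
      Real.mul_self_sqrt zero_le_two, Complex.ofReal_ofNat]
  have hψorth : ∀ p q, star (ψ p) ⬝ᵥ ψ q = if p = q then 1 else 0 := fun p q => by
    rw [hψe, star_smul, smul_dotProduct, dotProduct_smul, star_chiralState_dotProduct horth he,
      smul_eq_mul, smul_eq_mul, ← mul_assoc, hnorm]
    split_ifs <;> norm_num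
  have hcon : ∀ j, A *ᵥ star (u j) = ((lam j : ℂ) * e j) • u j := fun j => by
    rw [← hγ j, hc j]
    exact IsSymm.mulVec_star_eq_smul hA horth hu (injective_of_apply_zero_ne_apply_one hμ) j
  refine ⟨hψorth, ?_, fun j s => ?_⟩
  · exact (linearIndependent_of_star_dotProduct_eq_ite hψorth).span_eq_top_of_card_eq_finrank
      (by simp)
  · rw [hψe, mulVec_smul, smul_comm]
    exact congrArg _ (IsSymm.fromBlocks_mulVec_sumElim hA (hcon j) (Complex.conj_ofReal _) (he j)
      (by cases s <;> norm_num))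

/-- **Bloch eigenstates of the in-plane chiral Hamiltonian.**
Let `A` be complex symmetric with orthonormal eigenvectors `u 0, u 1`ized of
`A·Aᴴ` for distinct eigenvalues, and write the con-eigenvalues as
`c j = λ_j e^{-iγ_j}` with `λ_j = |c j|`. Then the four vectors
`ψ (j, ±) = (± e^{-iγ_j} u_j, conj u_j)/√2` form an orthonormal basis of `ℂ⁴`
and satisfy `H(A)·ψ (j, ±) = ± λ_j ψ (j, ±)`. -/
theorem bloch_eigenstates_chiral_hamiltonian
    (A : Matrix (Fin 2) (Fin 2) ℂ) (hA : Aᵀ = A)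
    (u : Fin 2 → Fin 2 → ℂ)
    (horth : ∀ j k : Fin 2, star (u j) ⬝ᵥ u k = if j = k then 1 else 0)
    (μ : Fin 2 → ℂ)
    (hu : ∀ j : Fin 2, (A * Aᴴ).mulVec (u j) = μ j • u j)
    (hμ : μ 0 ≠ μ 1)
    (c : Fin 2 → ℂ)
    (hc : ∀ j : Fin 2, c j = star (u j) ⬝ᵥ A.mulVec (star (u j)))
    (lam γ : Fin 2 → ℝ)
    (hlam : ∀ j : Fin 2, lam j = ‖c j‖)
    (hγ : ∀ j : Fin 2, c j = (lam j : ℂ) * Complex.exp (-(γ j : ℂ) * Complex.I))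
    (ψ : Fin 2 × Bool → (Fin 2 ⊕ Fin 2 → ℂ))
    (hψ : ∀ j : Fin 2, ∀ s : Bool,
      ψ (j, s) = ((Real.sqrt 2 : ℂ))⁻¹ •
        Sum.elim
          (fun i => (if s then (1 : ℂ) else -1)
            * Complex.exp (-(γ j : ℂ) * Complex.I) * u j i)
          (fun i => star (u j i))) :
    (∀ p q : Fin 2 × Bool, star (ψ p) ⬝ᵥ ψ q = if p = q then 1 else 0) ∧
    Submodule.span ℂ (Set.range ψ) = ⊤ ∧
    (∀ j : Fin 2, ∀ s : Bool,
      (Matrix.fromBlocks 0 A Aᴴ 0).mulVec (ψ (j, s))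
        = ((if s then (1 : ℂ) else -1) * (lam j : ℂ)) • ψ (j, s)) :=
  bloch_eigenstates_chiral_hamiltonian_general A hA u horth μ hu hμ c hc lam γ hγ ψ hψ
end

section
/- Let u ∈ ℂ² be a unit vector and define the 4×4 complex block matrices Σˣ = [[0, uuᵀ],[conj(uuᵀ), 0]], Σʸ = [[0, −i·uuᵀ],[i·conj(uuᵀ), 0]], Σᶻ = [[u uᴴ, 0],[0, −conj(u)·conj(u)ᴴ]] and Σ⁰ = [[u uᴴ, 0],[0, conj(u)·conj(u)ᴴ]]. Then (Σˣ)² = (Σʸ)² = (Σᶻ)² = Σ⁰, Σˣ·Σʸ = i·Σᶻ, Σʸ·Σᶻ = i·Σˣ, Σᶻ·Σˣ = i·Σʸ, and consequently the commutators satisfy [Σᵃ, Σᵇ] = 2i·Σᶜ for (a,b,c) any cyclic permutation of (x,y,z). -/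
open Matrix

lemma vmv_mul {n : Type*} [Fintype n] (a b c d : n → ℂ) :
    Matrix.vecMulVec a b * Matrix.vecMulVec c d
      = (b ⬝ᵥ c) • Matrix.vecMulVec a d := by
  ext i j
  simp only [mul_apply, vecMulVec_apply, Matrix.smul_apply, smul_eq_mul, dotProduct,
    Finset.sum_mul]
  congr 1; ext k; ring

/-- **Generalized Pauli matrices built from a unit vector satisfy the Pauli
algebra.** For a unit vector `u ∈ ℂ²`, the `4 × 4` matrices
`Σˣ = [[0, uuᵀ],[conj(uuᵀ), 0]]`, `Σʸ = [[0, -i·uuᵀ],[i·conj(uuᵀ), 0]]`,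
`Σᶻ = [[uuᴴ, 0],[0, -conj(u)conj(u)ᴴ]]`, `Σ⁰ = [[uuᴴ, 0],[0, conj(u)conj(u)ᴴ]]`
satisfy `(Σᵃ)² = Σ⁰`, `ΣˣΣʸ = iΣᶻ` (cyclically), and `[Σᵃ, Σᵇ] = 2iΣᶜ` for
cyclic `(a,b,c)`. -/
theorem generalized_pauli_algebra
    (u : Fin 2 → ℂ) (hu : star u ⬝ᵥ u = 1)
    (Sx Sy Sz S0 : Matrix (Fin 2 ⊕ Fin 2) (Fin 2 ⊕ Fin 2) ℂ)
    (hSx : Sx = Matrix.fromBlocks 0 (Matrix.vecMulVec u u)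
      (Matrix.vecMulVec (star u) (star u)) 0)
    (hSy : Sy = Matrix.fromBlocks 0 (-(Complex.I • Matrix.vecMulVec u u))
      (Complex.I • Matrix.vecMulVec (star u) (star u)) 0)
    (hSz : Sz = Matrix.fromBlocks (Matrix.vecMulVec u (star u)) 0 0
      (-(Matrix.vecMulVec (star u) u)))
    (hS0 : S0 = Matrix.fromBlocks (Matrix.vecMulVec u (star u)) 0 0
      (Matrix.vecMulVec (star u) u)) :
    (Sx * Sx = S0 ∧ Sy * Sy = S0 ∧ Sz * Sz = S0) ∧
    (Sx * Sy = Complex.I • Sz ∧ Sy * Sz = Complex.I • Sx ∧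
      Sz * Sx = Complex.I • Sy) ∧
    (Sx * Sy - Sy * Sx = (2 * Complex.I) • Sz ∧
      Sy * Sz - Sz * Sy = (2 * Complex.I) • Sx ∧
      Sz * Sx - Sx * Sz = (2 * Complex.I) • Sy) := by
  have hu' : u ⬝ᵥ star u = 1 := by rw [dotProduct_comm]; exact hu
  subst hSx hSy hSz hS0
  have hxy : Matrix.fromBlocks 0 (Matrix.vecMulVec u u)
      (Matrix.vecMulVec (star u) (star u)) 0 *
      Matrix.fromBlocks 0 (-(Complex.I • Matrix.vecMulVec u u))
      (Complex.I • Matrix.vecMulVec (star u) (star u)) 0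
      = Complex.I • Matrix.fromBlocks (Matrix.vecMulVec u (star u)) 0 0
      (-(Matrix.vecMulVec (star u) u)) := by
    simp [fromBlocks_multiply, fromBlocks_smul, Matrix.mul_smul, Matrix.smul_mul,
      vmv_mul, hu, hu', smul_smul, mul_comm]
  have hyz : Matrix.fromBlocks 0 (-(Complex.I • Matrix.vecMulVec u u))
      (Complex.I • Matrix.vecMulVec (star u) (star u)) 0 *
      Matrix.fromBlocks (Matrix.vecMulVec u (star u)) 0 0
      (-(Matrix.vecMulVec (star u) u))
      = Complex.I • Matrix.fromBlocks 0 (Matrix.vecMulVec u u)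
      (Matrix.vecMulVec (star u) (star u)) 0 := by
    simp [fromBlocks_multiply, fromBlocks_smul, Matrix.mul_smul, Matrix.smul_mul,
      vmv_mul, hu, hu', smul_smul, mul_comm]
  have hzx : Matrix.fromBlocks (Matrix.vecMulVec u (star u)) 0 0
      (-(Matrix.vecMulVec (star u) u)) *
      Matrix.fromBlocks 0 (Matrix.vecMulVec u u)
      (Matrix.vecMulVec (star u) (star u)) 0
      = Complex.I • Matrix.fromBlocks 0 (-(Complex.I • Matrix.vecMulVec u u))
      (Complex.I • Matrix.vecMulVec (star u) (star u)) 0 := by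
    simp [fromBlocks_multiply, fromBlocks_smul, Matrix.mul_smul, Matrix.smul_mul,
      vmv_mul, hu, hu', smul_smul, Complex.I_mul_I]
  have hyx : Matrix.fromBlocks 0 (-(Complex.I • Matrix.vecMulVec u u))
      (Complex.I • Matrix.vecMulVec (star u) (star u)) 0 *
      Matrix.fromBlocks 0 (Matrix.vecMulVec u u)
      (Matrix.vecMulVec (star u) (star u)) 0
      = -(Complex.I • Matrix.fromBlocks (Matrix.vecMulVec u (star u)) 0 0
      (-(Matrix.vecMulVec (star u) u))) := by
    simp [fromBlocks_multiply, fromBlocks_smul, Matrix.mul_smul, Matrix.smul_mul,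
      vmv_mul, hu, hu', smul_smul, fromBlocks_neg]
  have hzy : Matrix.fromBlocks (Matrix.vecMulVec u (star u)) 0 0
      (-(Matrix.vecMulVec (star u) u)) *
      Matrix.fromBlocks 0 (-(Complex.I • Matrix.vecMulVec u u))
      (Complex.I • Matrix.vecMulVec (star u) (star u)) 0
      = -(Complex.I • Matrix.fromBlocks 0 (Matrix.vecMulVec u u)
      (Matrix.vecMulVec (star u) (star u)) 0) := by
    simp [fromBlocks_multiply, fromBlocks_smul, Matrix.mul_smul, Matrix.smul_mul,
      vmv_mul, hu, hu', smul_smul, fromBlocks_neg]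
  have hxz : Matrix.fromBlocks 0 (Matrix.vecMulVec u u)
      (Matrix.vecMulVec (star u) (star u)) 0 *
      Matrix.fromBlocks (Matrix.vecMulVec u (star u)) 0 0
      (-(Matrix.vecMulVec (star u) u))
      = -(Complex.I • Matrix.fromBlocks 0 (-(Complex.I • Matrix.vecMulVec u u))
      (Complex.I • Matrix.vecMulVec (star u) (star u)) 0) := by
    simp [fromBlocks_multiply, fromBlocks_smul, Matrix.mul_smul, Matrix.smul_mul,
      vmv_mul, hu, hu', smul_smul, fromBlocks_neg, Complex.I_mul_I]
  refine ⟨⟨?_, ?_, ?_⟩, ⟨hxy, hyz, hzx⟩, ?_, ?_, ?_⟩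
  · simp [fromBlocks_multiply, vmv_mul, hu, hu']
  · simp [fromBlocks_multiply, Matrix.mul_smul, Matrix.smul_mul,
      vmv_mul, hu, hu', smul_smul, Complex.I_mul_I]
  · simp [fromBlocks_multiply, vmv_mul, hu, hu']
  · rw [hxy, hyx]; module
  · rw [hyz, hzy]; module
  · rw [hzx, hxz]; module
end

section
/- For θ ∈ [0, 2π], there exists ξ ∈ ℂ with |ξ| < 1 and 1 + e^{iθ} + e^{iθ/2}·ξ = 0 if and only if θ ∈ (2π/3, 4π/3). -/
/-! Writing `1 + e^{iθ} = e^{iθ/2} (e^{-iθ/2} + e^{iθ/2}) = e^{iθ/2} · 2 cos(θ/2)` shows that the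
equation has the single root `ξ = -2 cos(θ/2)`. So a root in the open unit disk exists iff
`|cos(θ/2)| < 1/2`, and since `cos` is strictly decreasing on `[0, π]` this means
`θ/2 ∈ (π/3, 2π/3)`. -/

open Complex in
theorem Complex.one_add_exp_mul_I (z : ℂ) :
    1 + exp (z * I) = exp (z / 2 * I) * (2 * cos (z / 2)) := by
  rw [two_cos, mul_add, ← exp_add, ← exp_add]
  ring_nf
  rw [exp_zero, add_comm]

theorem exists_norm_lt_one_root_iff_abs_cos_lt (θ : ℝ) :
    (∃ ξ : ℂ, ‖ξ‖ < 1 ∧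
        1 + Complex.exp (θ * Complex.I) + Complex.exp (((θ / 2 : ℝ) : ℂ) * Complex.I) * ξ = 0)
      ↔ |Real.cos (θ / 2)| < 1 / 2 := by
  have hroot : ∀ ξ : ℂ,
      1 + Complex.exp (θ * Complex.I) + Complex.exp (((θ / 2 : ℝ) : ℂ) * Complex.I) * ξ = 0 ↔
        ξ = ((-(2 * Real.cos (θ / 2)) : ℝ) : ℂ) := by
    intro ξ
    push_cast
    rw [Complex.one_add_exp_mul_I, ← mul_add, mul_eq_zero, or_iff_right (Complex.exp_ne_zero _),
      add_eq_zero_iff_eq_neg']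
  have hnorm : ‖((-(2 * Real.cos (θ / 2)) : ℝ) : ℂ)‖ = 2 * |Real.cos (θ / 2)| := by
    rw [Complex.norm_real, Real.norm_eq_abs, abs_neg, abs_mul, abs_two]
  simp only [hroot, exists_eq_right, hnorm]
  constructor <;> intro h <;> linarith

open Real in
theorem Real.abs_cos_lt_one_half_iff {φ : ℝ} (hφ : φ ∈ Set.Icc 0 π) :
    |cos φ| < 1 / 2 ↔ φ ∈ Set.Ioo (π / 3) (2 * π / 3) := by
  have hπ := pi_pos
  have hcos_two_pi_div_three : cos (2 * π / 3) = -(1 / 2) := by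
    rw [show 2 * π / 3 = π - π / 3 by ring, cos_pi_sub, cos_pi_div_three]
  have hlt_half : cos φ < 1 / 2 ↔ π / 3 < φ := by
    rw [← cos_pi_div_three]
    exact strictAntiOn_cos.lt_iff_gt hφ ⟨by positivity, by linarith⟩
  have hgt_neg_half : -(1 / 2) < cos φ ↔ φ < 2 * π / 3 := by
    rw [← hcos_two_pi_div_three]
    exact strictAntiOn_cos.lt_iff_gt ⟨by positivity, by linarith⟩ hφ
  rw [abs_lt, hlt_half, hgt_neg_half, Set.mem_Ioo, and_comm]

/-- **Existence range of zigzag out-of-plane edge states.**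
For `θ ∈ [0, 2π]`, there exists `ξ ∈ ℂ` with `|ξ| < 1` and
`1 + e^{iθ} + e^{iθ/2} ξ = 0` if and only if `θ ∈ (2π/3, 4π/3)`. -/
theorem zigzag_edge_state_existence_range
    (θ : ℝ) (hθ : θ ∈ Set.Icc (0 : ℝ) (2 * Real.pi)) :
    (∃ ξ : ℂ, ‖ξ‖ < 1 ∧
        1 + Complex.exp ((θ : ℝ) * Complex.I)
          + Complex.exp (((θ / 2 : ℝ) : ℂ) * Complex.I) * ξ = 0)
      ↔ θ ∈ Set.Ioo (2 * Real.pi / 3) (4 * Real.pi / 3) := by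
  have hhalf : θ / 2 ∈ Set.Icc 0 Real.pi := ⟨by linarith [hθ.1], by linarith [hθ.2]⟩
  rw [exists_norm_lt_one_root_iff_abs_cos_lt, Real.abs_cos_lt_one_half_iff hhalf]
  simp only [Set.mem_Ioo]
  constructor <;> rintro ⟨_, _⟩ <;> constructor <;> linarith
end

section
/- Let n₁ = (√3/2, 1/2), n₂ = (−√3/2, 1/2), n₃ = (0, −1) in ℝ², let Gᵢ = 3·nᵢnᵢᵀ − I₂, and for θ ∈ [0, 2π] define the polynomial q_θ(ξ) = det( e^{iθ/2}·ξ·G₁ + e^{iθ}·G₂ + G₃ ) in the complex variable ξ. Then q_θ is a quadratic polynomial in ξ with leading coefficient −2·e^{iθ}, and: (i) if θ ∈ [0, 2π/3) ∪ (4π/3, 2π], then q_θ has exactly one root ξ (counted with multiplicity) with |ξ| < 1; (ii) if θ ∈ (2π/3, 4π/3), then q_θ has no root ξ with |ξ| < 1. -/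
/-! With `w = e^{iθ/2}` and `c = cos (θ/2)`, the identity `2cw = w² + 1` turns `q_θ(ξ)` into
`-2w² (ξ² - (11/4) c ξ + 4c² - 27/8)`, a real quadratic with positive discriminant
`27/2 - (135/16) c²`. Its real roots satisfy `(1 - r₁²)(1 - r₂²) = (1 - 4c²)(361 - 256c²)/64`.
For `4c² > 1` this is negative, so exactly one root lies in `(-1, 1)`. For `4c² < 1` it is
positive, so both roots lie on the same side of the unit circle, and that side is the outside
because `r₁ r₂ = 4c² - 27/8 < -1`. -/

open Matrix Polynomial Real

theorem Complex.two_mul_cos_mul_exp_mul_I (x : ℂ) :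
    2 * Complex.cos x * Complex.exp (x * Complex.I) = Complex.exp (x * Complex.I) ^ 2 + 1 := by
  have h : Complex.exp (-x * Complex.I) * Complex.exp (x * Complex.I) = 1 := by
    rw [← Complex.exp_add, neg_mul, neg_add_cancel, Complex.exp_zero]
  rw [Complex.two_cos]
  linear_combination h

theorem Real.cos_two_pi_div_three : cos (2 * π / 3) = -(1 / 2) := by
  rw [show 2 * π / 3 = π - π / 3 by ring, cos_pi_sub, cos_pi_div_three]

theorem one_lt_four_mul_cos_half_sq {θ : ℝ}
    (hθ : θ ∈ Set.Ico 0 (2 * π / 3) ∪ Set.Ioc (4 * π / 3) (2 * π)) :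
    1 < 4 * cos (θ / 2) ^ 2 := by
  rcases hθ with ⟨h0, h1⟩ | ⟨h0, h1⟩
  · have : cos (π / 3) < cos (θ / 2) :=
      strictAntiOn_cos ⟨by linarith, by linarith⟩ ⟨by linarith [pi_pos], by linarith⟩
        (by linarith)
    nlinarith [cos_pi_div_three]
  · have : cos (θ / 2) < cos (2 * π / 3) :=
      strictAntiOn_cos ⟨by linarith [pi_pos], by linarith⟩ ⟨by linarith [pi_pos], by linarith⟩
        (by linarith)
    nlinarith [cos_two_pi_div_three]

theorem four_mul_cos_half_sq_lt_one {θ : ℝ} (hθ : θ ∈ Set.Ioo (2 * π / 3) (4 * π / 3)) :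
    4 * cos (θ / 2) ^ 2 < 1 := by
  obtain ⟨h0, h1⟩ := hθ
  have hlo : cos (2 * π / 3) < cos (θ / 2) :=
    strictAntiOn_cos ⟨by linarith [pi_pos], by linarith⟩ ⟨by linarith [pi_pos], by linarith⟩
      (by linarith)
  have hhi : cos (θ / 2) < cos (π / 3) :=
    strictAntiOn_cos ⟨by linarith [pi_pos], by linarith⟩ ⟨by linarith [pi_pos], by linarith⟩
      (by linarith)
  rw [cos_two_pi_div_three] at hlo
  rw [cos_pi_div_three] at hhi
  nlinarith

theorem exists_add_eq_mul_eq {s p : ℝ} (h : 4 * p ≤ s ^ 2) :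
    ∃ r₁ r₂ : ℝ, r₁ + r₂ = s ∧ r₁ * r₂ = p := by
  refine ⟨(s - √(s ^ 2 - 4 * p)) / 2, (s + √(s ^ 2 - 4 * p)) / 2, by ring, ?_⟩
  linear_combination (-1 / 4 : ℝ) * Real.sq_sqrt (sub_nonneg.2 h)

theorem card_roots_filter_norm_lt_one {a : ℂ} (ha : a ≠ 0) (r₁ r₂ : ℝ) :
    Multiset.card ((C a * ((X - C (r₁ : ℂ)) * (X - C (r₂ : ℂ)))).roots.filter
      (fun ξ => ‖ξ‖ < 1)) = (if r₁ ^ 2 < 1 then 1 else 0) + (if r₂ ^ 2 < 1 then 1 else 0) := by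
  rw [roots_C_mul _ ha, roots_mul (mul_ne_zero (X_sub_C_ne_zero _) (X_sub_C_ne_zero _)),
    roots_X_sub_C, roots_X_sub_C, Multiset.filter_add, Multiset.filter_singleton,
    Multiset.filter_singleton]
  simp only [Complex.norm_real, Real.norm_eq_abs, ← sq_lt_one_iff_abs_lt_one]
  split_ifs <;> rfl

theorem card_roots_filter_norm_lt_one_eq_one {a : ℂ} (ha : a ≠ 0) {r₁ r₂ : ℝ}
    (h : (1 - r₁ ^ 2) * (1 - r₂ ^ 2) < 0) :
    Multiset.card ((C a * ((X - C (r₁ : ℂ)) * (X - C (r₂ : ℂ)))).roots.filter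
      (fun ξ => ‖ξ‖ < 1)) = 1 := by
  rw [card_roots_filter_norm_lt_one ha]
  rcases mul_neg_iff.1 h with ⟨h₁, h₂⟩ | ⟨h₁, h₂⟩
  · rw [if_pos (by linarith), if_neg (by linarith)]
  · rw [if_neg (by linarith), if_pos (by linarith)]

theorem card_roots_filter_norm_lt_one_eq_zero {a : ℂ} (ha : a ≠ 0) {r₁ r₂ : ℝ}
    (h : 0 < (1 - r₁ ^ 2) * (1 - r₂ ^ 2)) (hprod : 1 < (r₁ * r₂) ^ 2) :
    Multiset.card ((C a * ((X - C (r₁ : ℂ)) * (X - C (r₂ : ℂ)))).roots.filter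
      (fun ξ => ‖ξ‖ < 1)) = 0 := by
  rw [card_roots_filter_norm_lt_one ha]
  rcases mul_pos_iff.1 h with ⟨h₁, h₂⟩ | ⟨h₁, h₂⟩
  · nlinarith [sq_nonneg r₁, sq_nonneg r₂]
  · rw [if_neg (by linarith), if_neg (by linarith)]

def dipoleGreen (n : Fin 2 → ℝ) : Matrix (Fin 2) (Fin 2) ℝ := (3 : ℝ) • vecMulVec n n - 1

theorem det_smul_dipoleGreen_add (a b : ℂ) :
    (a • (dipoleGreen ![Real.sqrt 3 / 2, 1 / 2]).map Complex.ofReal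
      + b • (dipoleGreen ![-(Real.sqrt 3) / 2, 1 / 2]).map Complex.ofReal
      + (dipoleGreen ![0, -1]).map Complex.ofReal).det
      = -2 * (a + b) ^ 2 + 27 / 4 * a * b + 11 / 4 * (a + b) - 2 := by
  have hs3 : ((Real.sqrt 3 : ℝ) : ℂ) ^ 2 = 3 := by
    exact_mod_cast Real.sq_sqrt (by norm_num : (0 : ℝ) ≤ 3)
  simp only [dipoleGreen, one_div, vecMulVec_cons, Nat.succ_eq_add_one, Nat.reduceAdd, smul_cons,
    smul_eq_mul, smul_empty, smul_of, mul_zero, mul_neg, mul_one, det_fin_two, Fin.isValue,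
    Matrix.add_apply, Matrix.smul_apply, map_apply, Matrix.sub_apply, of_apply, Pi.smul_apply,
    cons_val_zero, one_apply, ↓reduceIte, Complex.ofReal_sub, Complex.ofReal_mul,
    Complex.ofReal_ofNat, Complex.ofReal_div, Complex.ofReal_one, Complex.ofReal_neg, neg_zero,
    zero_sub, cons_val_one, cons_val_fin_one, Complex.ofReal_inv, neg_neg, zero_ne_one, sub_zero,
    sub_self, Complex.ofReal_zero, add_zero, one_ne_zero, neg_mul]
  linear_combination (3 / 4 * (a + b) * (2 - (a + b) / 4) - 9 / 16 * (a - b) ^ 2) * hs3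

theorem det_smul_dipoleGreen_add_of_two_mul_mul_eq {w c : ℂ} (hcw : 2 * c * w = w ^ 2 + 1)
    (ξ : ℂ) :
    ((w * ξ) • (dipoleGreen ![Real.sqrt 3 / 2, 1 / 2]).map Complex.ofReal
      + w ^ 2 • (dipoleGreen ![-(Real.sqrt 3) / 2, 1 / 2]).map Complex.ofReal
      + (dipoleGreen ![0, -1]).map Complex.ofReal).det
      = -2 * w ^ 2 * (ξ ^ 2 - 11 / 4 * c * ξ + (4 * c ^ 2 - 27 / 8)) := by
  rw [det_smul_dipoleGreen_add]
  linear_combination (2 * (w ^ 2 + 1 + 2 * c * w) - 11 / 4 * w * ξ) * hcw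

open scoped Classical in
theorem inplane_zigzag_edge_state_count_general
    (n₁ n₂ n₃ : Fin 2 → ℝ)
    (hn₁ : n₁ = ![Real.sqrt 3 / 2, 1 / 2])
    (hn₂ : n₂ = ![-(Real.sqrt 3) / 2, 1 / 2])
    (hn₃ : n₃ = ![0, -1])
    (G₁ G₂ G₃ : Matrix (Fin 2) (Fin 2) ℝ)
    (hG₁ : G₁ = (3 : ℝ) • Matrix.vecMulVec n₁ n₁ - 1)
    (hG₂ : G₂ = (3 : ℝ) • Matrix.vecMulVec n₂ n₂ - 1)
    (hG₃ : G₃ = (3 : ℝ) • Matrix.vecMulVec n₃ n₃ - 1)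
    (θ : ℝ) :
    ∃ P : Polynomial ℂ,
      (∀ ξ : ℂ, P.eval ξ =
        ((Complex.exp (((θ / 2 : ℝ) : ℂ) * Complex.I) * ξ) • G₁.map Complex.ofReal
          + Complex.exp ((θ : ℝ) * Complex.I) • G₂.map Complex.ofReal
          + G₃.map Complex.ofReal).det) ∧
      P.degree = 2 ∧
      P.leadingCoeff = -2 * Complex.exp ((θ : ℝ) * Complex.I) ∧
      (θ ∈ Set.Ico (0 : ℝ) (2 * Real.pi / 3) ∪
          Set.Ioc (4 * Real.pi / 3) (2 * Real.pi) →
        Multiset.card (P.roots.filter (fun ξ => ‖ξ‖ < 1)) = 1) ∧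
      (θ ∈ Set.Ioo (2 * Real.pi / 3) (4 * Real.pi / 3) →
        Multiset.card (P.roots.filter (fun ξ => ‖ξ‖ < 1)) = 0) := by
  set w := Complex.exp (((θ / 2 : ℝ) : ℂ) * Complex.I) with hw
  set c := Real.cos (θ / 2) with hc
  have hw2 : Complex.exp ((θ : ℝ) * Complex.I) = w ^ 2 := by
    rw [hw, ← Complex.exp_nat_mul]; push_cast; ring_nf
  have hcw : 2 * (c : ℂ) * w = w ^ 2 + 1 := by
    rw [hc, Complex.ofReal_cos]; exact Complex.two_mul_cos_mul_exp_mul_I _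
  obtain ⟨r₁, r₂, hsum, hprod⟩ := exists_add_eq_mul_eq (s := 11 / 4 * c) (p := 4 * c ^ 2 - 27 / 8)
    (by nlinarith [cos_sq_le_one (θ / 2)])
  have hroots : (1 - r₁ ^ 2) * (1 - r₂ ^ 2) = (1 - 4 * c ^ 2) * (361 - 256 * c ^ 2) / 64 := by
    linear_combination (2 + r₁ * r₂ + (4 * c ^ 2 - 27 / 8)) * hprod - (r₁ + r₂ + 11 / 4 * c) * hsum
  have ha : -2 * w ^ 2 ≠ 0 := by simp [w, Complex.exp_ne_zero]
  refine ⟨C (-2 * w ^ 2) * ((X - C (r₁ : ℂ)) * (X - C (r₂ : ℂ))), fun ξ => ?_, ?_, ?_,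
    fun h => card_roots_filter_norm_lt_one_eq_one ha ?_,
    fun h => card_roots_filter_norm_lt_one_eq_zero ha ?_ ?_⟩
  · subst hn₁ hn₂ hn₃ hG₁ hG₂ hG₃
    have hsumC := congrArg Complex.ofReal hsum
    have hprodC := congrArg Complex.ofReal hprod
    push_cast at hsumC hprodC
    rw [hw2]
    refine .trans ?_ (det_smul_dipoleGreen_add_of_two_mul_mul_eq hcw ξ).symm
    simp only [eval_mul, eval_C, eval_sub, eval_X]
    linear_combination (2 * w ^ 2 * ξ) * hsumC - 2 * w ^ 2 * hprodC
  · rw [degree_C_mul ha, degree_mul, degree_X_sub_C, degree_X_sub_C]; rfl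
  · rw [leadingCoeff_mul, leadingCoeff_mul, leadingCoeff_C, leadingCoeff_X_sub_C,
      leadingCoeff_X_sub_C, hw2, mul_one, mul_one]
  · nlinarith [one_lt_four_mul_cos_half_sq h, cos_sq_le_one (θ / 2)]
  · nlinarith [four_mul_cos_half_sq_lt_one h, sq_nonneg c]
  · rw [hprod]; nlinarith [four_mul_cos_half_sq_lt_one h, sq_nonneg c]

open scoped Classical in
/-- **In-plane zigzag flat edge state count from roots of `det Ã(k∥, ξ)ᴴ`.**
With `Gᵢ = 3nᵢnᵢᵀ - I₂` the in-plane Green matrices, the function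
`q_θ(ξ) = det(e^{iθ/2} ξ G₁ + e^{iθ} G₂ + G₃)` is a quadratic polynomial in `ξ`
with leading coefficient `-2e^{iθ}`, having exactly one root (with
multiplicity) inside the unit disk for `θ ∈ [0, 2π/3) ∪ (4π/3, 2π]` and none
for `θ ∈ (2π/3, 4π/3)`. -/
theorem inplane_zigzag_edge_state_count
    (n₁ n₂ n₃ : Fin 2 → ℝ)
    (hn₁ : n₁ = ![Real.sqrt 3 / 2, 1 / 2])
    (hn₂ : n₂ = ![-(Real.sqrt 3) / 2, 1 / 2])
    (hn₃ : n₃ = ![0, -1])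
    (G₁ G₂ G₃ : Matrix (Fin 2) (Fin 2) ℝ)
    (hG₁ : G₁ = (3 : ℝ) • Matrix.vecMulVec n₁ n₁ - 1)
    (hG₂ : G₂ = (3 : ℝ) • Matrix.vecMulVec n₂ n₂ - 1)
    (hG₃ : G₃ = (3 : ℝ) • Matrix.vecMulVec n₃ n₃ - 1)
    (θ : ℝ) (hθ : θ ∈ Set.Icc (0 : ℝ) (2 * Real.pi)) :
    ∃ P : Polynomial ℂ,
      (∀ ξ : ℂ, P.eval ξ =
        ((Complex.exp (((θ / 2 : ℝ) : ℂ) * Complex.I) * ξ) • G₁.map Complex.ofReal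
          + Complex.exp ((θ : ℝ) * Complex.I) • G₂.map Complex.ofReal
          + G₃.map Complex.ofReal).det) ∧
      P.degree = 2 ∧
      P.leadingCoeff = -2 * Complex.exp ((θ : ℝ) * Complex.I) ∧
      (θ ∈ Set.Ico (0 : ℝ) (2 * Real.pi / 3) ∪
          Set.Ioc (4 * Real.pi / 3) (2 * Real.pi) →
        Multiset.card (P.roots.filter (fun ξ => ‖ξ‖ < 1)) = 1) ∧
      (θ ∈ Set.Ioo (2 * Real.pi / 3) (4 * Real.pi / 3) →
        Multiset.card (P.roots.filter (fun ξ => ‖ξ‖ < 1)) = 0) :=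
  inplane_zigzag_edge_state_count_general n₁ n₂ n₃ hn₁ hn₂ hn₃ G₁ G₂ G₃ hG₁ hG₂ hG₃ θ
end
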